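/- Let Pic be the free ℤ-module of rank 10 with basis written either as H_q, H_p, E₁, …, E₈ or as H_x, H_y, F₁, …, F₈, equipped with the symmetric bilinear form • determined by H•H = 0 for each of the two H-generators, H_q•H_p = 1 (resp. H_x•H_y = 1), H•E_i = 0 and E_i•E_j = −δ_ij. Let T': Pic → Pic be the ℤ-linear map determined by T'(H_q) = H_x+H_y−F₃−F₄, T'(H_p) = H_x+H_y−F₁−F₃, T'(E₁) = H_x−F₃, T'(E₂) = F₂, T'(E₃) = H_x+H_y−F₁−F₃−F₄, T'(E₄) = H_y−F₃, T'(E_i) = F_i for i = 5,6,7,8, and let S': Pic → Pic be determined by S'(H_x) = H_q+H_p−E₃−E₄, S'(H_y) = H_q+H_p−E₁−E₃, S'(F₁) = H_q−E₃, S'(F₂) = E₂, S'(F₃) = H_q+H_p−E₁−E₃−E₄, S'(F₄) = H_p−E₃, S'(F_i) = E_i for i = 5,6,7,8. Then: (i) S' ∘ T' and T' ∘ S' are the identity on Pic; (ii) T' preserves the intersection form; (iii) T' maps the standard surface roots (E₇−E₈, E₁−E₂, H_q−E₁−E₅, E₅−E₆, H_p−E₃−E₅, E₃−E₄, E₆−E₇)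 respectively to (F₇−F₈, H_x−F₂−F₃, H_y−F₄−F₅, F₅−F₆, F₄−F₅, H_x−F₁−F₄, F₆−F₇); (iv) T' maps the standard symmetry roots α₀ = H_q+H_p−E₅−E₆−E₇−E₈, α₁ = H_q−E₃−E₄, α₂ = H_p−E₁−E₂ respectively to 2H_x+2H_y−F₁−2F₃−F₄−F₅−F₆−F₇−F₈, −H_y+F₁+F₃, and H_y−F₁−F₂. -/

import Mathlib

/-- The Picard lattice: the free ℤ-module of rank 10, with basis written either as
H_q, H_p, E₁, …, E₈ or as H_x, H_y, F₁, …, F₈. -/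
abbrev Pic : Type := Fin 10 → ℤ

/-- The intersection form on the Picard lattice. -/
def ip (v w : Pic) : ℤ :=
  v 0 * w 1 + v 1 * w 0 - v 2 * w 2 - v 3 * w 3 - v 4 * w 4 - v 5 * w 5
    - v 6 * w 6 - v 7 * w 7 - v 8 * w 8 - v 9 * w 9

def Hq : Pic := Pi.single 0 1
def Hp : Pic := Pi.single 1 1
def E1 : Pic := Pi.single 2 1
def E2 : Pic := Pi.single 3 1
def E3 : Pic := Pi.single 4 1
def E4 : Pic := Pi.single 5 1
def E5 : Pic := Pi.single 6 1
def E6 : Pic := Pi.single 7 1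
def E7 : Pic := Pi.single 8 1
def E8 : Pic := Pi.single 9 1

def Hx : Pic := Pi.single 0 1
def Hy : Pic := Pi.single 1 1
def F1 : Pic := Pi.single 2 1
def F2 : Pic := Pi.single 3 1
def F3 : Pic := Pi.single 4 1
def F4 : Pic := Pi.single 5 1
def F5 : Pic := Pi.single 6 1
def F6 : Pic := Pi.single 7 1
def F7 : Pic := Pi.single 8 1
def F8 : Pic := Pi.single 9 1


/-! In the standard coordinates, `T'` and `S'` are the integer matrices whose columns are the
prescribed images of the basis vectors. Invertibility and isometry then become the matrix
identities `N * M = 1` and `Mᵀ * G * M = G`, with `G` the Gram matrix of the intersection form,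
which are finite computations; the images of the roots follow by linearity. -/

open Matrix

theorem LinearMap.toMatrix'_eq_transpose_of_apply_single {R n : Type*} [CommSemiring R]
    [Fintype n] [DecidableEq n] {f : (n → R) →ₗ[R] (n → R)} {v : n → n → R}
    (h : ∀ j, f (Pi.single j 1) = v j) : LinearMap.toMatrix' f = (Matrix.of v)ᵀ := by
  ext i j
  simp [LinearMap.toMatrix'_apply, ← h]

theorem LinearMap.dotProduct_mulVec_map_map {R n : Type*} [CommSemiring R]
    [Fintype n] [DecidableEq n] {f : (n → R) →ₗ[R] (n → R)} {G : Matrix n n R}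
    (h : (LinearMap.toMatrix' f)ᵀ * G * LinearMap.toMatrix' f = G) (v w : n → R) :
    f v ⬝ᵥ G *ᵥ f w = v ⬝ᵥ G *ᵥ w := by
  conv_rhs => rw [← h, Matrix.mul_assoc, ← mulVec_mulVec, ← mulVec_mulVec, dotProduct_mulVec,
    vecMul_transpose]
  simp only [LinearMap.toMatrix'_mulVec]

def intersectionMatrix : Matrix (Fin 10) (Fin 10) ℤ :=
  Matrix.of fun i j => ip (Pi.single i 1) (Pi.single j 1)

theorem ip_eq_dotProduct_mulVec (v w : Pic) : ip v w = v ⬝ᵥ intersectionMatrix *ᵥ w := by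
  simp [ip, intersectionMatrix, dotProduct, mulVec, Fin.sum_univ_succ, Pi.single_apply]
  ring

def finalChangeMatrix : Matrix (Fin 10) (Fin 10) ℤ :=
  (Matrix.of ![Hx + Hy - F3 - F4, Hx + Hy - F1 - F3, Hx - F3, F2, Hx + Hy - F1 - F3 - F4,
    Hy - F3, F5, F6, F7, F8])ᵀ

def finalChangeInverseMatrix : Matrix (Fin 10) (Fin 10) ℤ :=
  (Matrix.of ![Hq + Hp - E3 - E4, Hq + Hp - E1 - E3, Hq - E3, E2, Hq + Hp - E1 - E3 - E4,
    Hp - E3, E5, E6, E7, E8])ᵀ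

theorem finalChangeInverseMatrix_mul_finalChangeMatrix :
    finalChangeInverseMatrix * finalChangeMatrix = 1 := by
  decide

theorem finalChangeMatrix_isometry :
    finalChangeMatrixᵀ * intersectionMatrix * finalChangeMatrix = intersectionMatrix := by
  decide

/-- the final change of basis T' of the Picard lattice is invertible (with
inverse S'), preserves the intersection form, identifies the standard E₆⁽¹⁾ surface root
bases, and maps the standard A₂⁽¹⁾ symmetry roots to the final symmetry root basis for the
semiclassical Laguerre weight recurrence. -/
theorem stmt17 (T' S' : Pic →ₗ[ℤ] Pic)
    (hTHq : T' Hq = Hx + Hy - F3 - F4) (hTHp : T' Hp = Hx + Hy - F1 - F3)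
    (hTE1 : T' E1 = Hx - F3) (hTE2 : T' E2 = F2)
    (hTE3 : T' E3 = Hx + Hy - F1 - F3 - F4) (hTE4 : T' E4 = Hy - F3)
    (hTE5 : T' E5 = F5) (hTE6 : T' E6 = F6) (hTE7 : T' E7 = F7) (hTE8 : T' E8 = F8)
    (hSHx : S' Hx = Hq + Hp - E3 - E4) (hSHy : S' Hy = Hq + Hp - E1 - E3)
    (hSF1 : S' F1 = Hq - E3) (hSF2 : S' F2 = E2)
    (hSF3 : S' F3 = Hq + Hp - E1 - E3 - E4) (hSF4 : S' F4 = Hp - E3)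
    (hSF5 : S' F5 = E5) (hSF6 : S' F6 = E6) (hSF7 : S' F7 = E7) (hSF8 : S' F8 = E8) :
    S'.comp T' = LinearMap.id ∧ T'.comp S' = LinearMap.id ∧
    (∀ C1 C2 : Pic, ip (T' C1) (T' C2) = ip C1 C2) ∧
    T' (E7 - E8) = F7 - F8 ∧
    T' (E1 - E2) = Hx - F2 - F3 ∧
    T' (Hq - E1 - E5) = Hy - F4 - F5 ∧
    T' (E5 - E6) = F5 - F6 ∧
    T' (Hp - E3 - E5) = F4 - F5 ∧
    T' (E3 - E4) = Hx - F1 - F4 ∧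
    T' (E6 - E7) = F6 - F7 ∧
    T' (Hq + Hp - E5 - E6 - E7 - E8) =
      (2 : ℤ) • Hx + (2 : ℤ) • Hy - F1 - (2 : ℤ) • F3 - F4 - F5 - F6 - F7 - F8 ∧
    T' (Hq - E3 - E4) = -Hy + F1 + F3 ∧
    T' (Hp - E1 - E2) = Hy - F1 - F2 := by
  have hT : LinearMap.toMatrix' T' = finalChangeMatrix :=
    LinearMap.toMatrix'_eq_transpose_of_apply_single fun j => by fin_cases j <;> assumption
  have hS : LinearMap.toMatrix' S' = finalChangeInverseMatrix :=
    LinearMap.toMatrix'_eq_transpose_of_apply_single fun j => by fin_cases j <;> assumption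
  have hST : LinearMap.toMatrix' (S'.comp T') = 1 := by
    rw [LinearMap.toMatrix'_comp, hS, hT, finalChangeInverseMatrix_mul_finalChangeMatrix]
  refine ⟨?_, ?_, fun v w => ?_, ?_, ?_, ?_, ?_, ?_, ?_, ?_, ?_, ?_, ?_⟩
  · exact LinearMap.toMatrix'.injective (hST.trans LinearMap.toMatrix'_id.symm)
  · apply LinearMap.toMatrix'.injective
    rw [LinearMap.toMatrix'_comp, LinearMap.toMatrix'_id, ← mul_eq_one_comm,
      ← LinearMap.toMatrix'_comp, hST]
  · rw [ip_eq_dotProduct_mulVec, ip_eq_dotProduct_mulVec,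
      LinearMap.dotProduct_mulVec_map_map (hT ▸ finalChangeMatrix_isometry)]
  all_goals
    simp only [map_add, map_sub, hTHq, hTHp, hTE1, hTE2, hTE3, hTE4, hTE5, hTE6, hTE7, hTE8]
  all_goals abel
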